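/- Let f, g be Boolean functions over a finite variable set V. If f is balanced, g is balanced, and f is statistically independent of g, then for any Boolean function h, the function f ⊕ h is statistically independent of g if and only if h is statistically independent of f ⊕ g. -/

import Mathlib

/-!
Measure each Boolean function `φ` by its sign sum `χ φ = ∑ α, (-1) ^ φ α`. Since
`4 N(φ ∧ ψ) = 2ⁿ - χ φ - χ ψ + χ (φ ⊕ ψ)`, independence of `φ` and `ψ` reads
`2ⁿ χ (φ ⊕ ψ) = χ φ χ ψ`, and (for nonempty `V`) balance reads `χ φ = 0`. So the hypotheses give
`χ (f ⊕ g) = 0`, and then both sides of the equivalence say `χ (f ⊕ g ⊕ h) = 0`.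
-/

namespace Danira

instance : Std.Commutative xor := ⟨Bool.xor_comm⟩
instance : Std.Associative xor := ⟨Bool.xor_assoc⟩
instance : Std.Commutative or := ⟨Bool.or_comm⟩
instance : Std.Associative or := ⟨Bool.or_assoc⟩

variable {V : Type*} [Fintype V] [DecidableEq V]

/-- Number of satisfying assignments of a Boolean function. -/
def weight (f : (V → Bool) → Bool) : ℕ :=
  (Finset.univ.filter fun α : V → Bool => f α = true).card

/-- A Boolean function is balanced if exactly half of all assignments satisfy it. -/
def Balanced (f : (V → Bool) → Bool) : Prop :=
  weight f = 2 ^ (Fintype.card V - 1)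

/-- Statistical independence of two Boolean functions. -/
def StatIndep (f g : (V → Bool) → Bool) : Prop :=
  weight (fun α => f α && g α) * weight (fun α => !f α)
    = weight (fun α => !f α && g α) * weight f

/-- `f` functionally depends on variable `x`. -/
def FunDep (f : (V → Bool) → Bool) (x : V) : Prop :=
  ∃ α β : V → Bool, (∀ v, v ≠ x → α v = β v) ∧ f α ≠ f β

instance (f : (V → Bool) → Bool) (x : V) : Decidable (FunDep f x) := by
  unfold FunDep; infer_instance

/-- Partial evaluation `f[b/x]`. -/
def subst (f : (V → Bool) → Bool) (x : V) (b : Bool) : (V → Bool) → Bool :=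
  fun α => f (Function.update α x b)

/-- Variables that can be linearly factored out of `f`. -/
def Fact (f : (V → Bool) → Bool) : Finset V :=
  Finset.univ.filter fun x => ∀ α, xor (subst f x false α) (subst f x true α) = true

/-- Essential variables of `f`. -/
def Ess (f : (V → Bool) → Bool) : Finset V :=
  Finset.univ.filter fun x => FunDep f x


def signSum (φ : (V → Bool) → Bool) : ℤ :=
  ∑ α, if φ α then -1 else 1

lemma weight_eq_sum (φ : (V → Bool) → Bool) :
    weight φ = ∑ α, if φ α then 1 else 0 :=
  (Finset.sum_boole _ _).symm

lemma sum_one_eq_two_pow {R : Type*} [Semiring R] :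
    ∑ _α : V → Bool, (1 : R) = 2 ^ Fintype.card V := by
  simp

lemma weight_add_weight_not (φ : (V → Bool) → Bool) :
    weight φ + weight (fun α => !φ α) = 2 ^ Fintype.card V := by
  rw [weight_eq_sum, weight_eq_sum, ← Finset.sum_add_distrib, ← sum_one_eq_two_pow]
  exact Finset.sum_congr rfl fun α _ => by cases φ α <;> rfl

lemma weight_and_add_weight_not_and (φ ψ : (V → Bool) → Bool) :
    weight (fun α => φ α && ψ α) + weight (fun α => !φ α && ψ α) = weight ψ := by
  simp only [weight_eq_sum, ← Finset.sum_add_distrib]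
  exact Finset.sum_congr rfl fun α _ => by cases φ α <;> cases ψ α <;> rfl

lemma statIndep_iff_weight_and_mul (φ ψ : (V → Bool) → Bool) :
    StatIndep φ ψ ↔
      weight (fun α => φ α && ψ α) * 2 ^ Fintype.card V = weight φ * weight ψ := by
  have hφ := weight_add_weight_not φ
  have hψ := weight_and_add_weight_not_and φ ψ
  rw [StatIndep, ← hφ, ← hψ]
  constructor <;> intro h <;> linarith

lemma two_mul_weight (φ : (V → Bool) → Bool) :
    2 * (weight φ : ℤ) = 2 ^ Fintype.card V - signSum φ := by
  rw [weight_eq_sum, signSum, ← sum_one_eq_two_pow]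
  push_cast
  rw [Finset.mul_sum, ← Finset.sum_sub_distrib]
  exact Finset.sum_congr rfl fun α _ => by cases φ α <;> rfl

lemma four_mul_weight_and (φ ψ : (V → Bool) → Bool) :
    4 * (weight (fun α => φ α && ψ α) : ℤ) = 2 ^ Fintype.card V - signSum φ - signSum ψ
      + signSum (fun α => xor (φ α) (ψ α)) := by
  rw [weight_eq_sum, signSum, signSum, signSum, ← sum_one_eq_two_pow]
  push_cast
  rw [Finset.mul_sum, ← Finset.sum_sub_distrib, ← Finset.sum_sub_distrib, ← Finset.sum_add_distrib]
  exact Finset.sum_congr rfl fun α _ => by cases φ α <;> cases ψ α <;> rfl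

lemma statIndep_iff_signSum (φ ψ : (V → Bool) → Bool) :
    StatIndep φ ψ ↔
      2 ^ Fintype.card V * signSum (fun α => xor (φ α) (ψ α)) = signSum φ * signSum ψ := by
  have key : 4 * ((weight (fun α => φ α && ψ α) : ℤ) * 2 ^ Fintype.card V - weight φ * weight ψ)
      = 2 ^ Fintype.card V * signSum (fun α => xor (φ α) (ψ α)) - signSum φ * signSum ψ := by
    linear_combination (2 : ℤ) ^ Fintype.card V * four_mul_weight_and φ ψ
      - (weight ψ : ℤ) * two_mul_weight φ * 2
      - (2 ^ Fintype.card V - signSum φ) * two_mul_weight ψ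
  rw [statIndep_iff_weight_and_mul, ← @Nat.cast_inj ℤ]
  push_cast
  rw [← sub_eq_zero, ← sub_eq_zero (a := 2 ^ Fintype.card V * _), ← key]
  norm_num

lemma statIndep_of_isEmpty [IsEmpty V] (φ ψ : (V → Bool) → Bool) : StatIndep φ ψ := by
  rw [statIndep_iff_signSum, signSum, signSum, signSum, Fintype.card_eq_zero, Fintype.sum_unique,
    Fintype.sum_unique, Fintype.sum_unique, pow_zero, one_mul]
  have sign_xor : ∀ a b : Bool,
      (if xor a b then (-1 : ℤ) else 1) = (if a then -1 else 1) * (if b then -1 else 1) := by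
    decide
  exact sign_xor _ _

lemma Balanced.signSum_eq_zero [Nonempty V] {φ : (V → Bool) → Bool} (hφ : Balanced φ) :
    signSum φ = 0 := by
  have h := two_mul_weight φ
  rw [hφ, Nat.cast_pow, Nat.cast_ofNat, mul_pow_sub_one Fintype.card_ne_zero] at h
  linarith

theorem stmt11 (f g h : (V → Bool) → Bool)
    (hf : Balanced f) (hg : Balanced g) (hfg : StatIndep f g) :
    StatIndep (fun α => xor (f α) (h α)) g
      ↔ StatIndep h (fun α => xor (f α) (g α)) := by
  -- For empty `V`, `Balanced` degenerates (`0 - 1 = 0`), but over a single assignment every pair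
  -- of functions is independent.
  rcases isEmpty_or_nonempty V with hV | hV
  · exact iff_of_true (statIndep_of_isEmpty _ _) (statIndep_of_isEmpty _ _)
  have hT : (2 : ℤ) ^ Fintype.card V ≠ 0 := by positivity
  have hfg0 : signSum (fun α => xor (f α) (g α)) = 0 := by
    rwa [statIndep_iff_signSum, hf.signSum_eq_zero, zero_mul, mul_eq_zero, or_iff_right hT] at hfg
  rw [statIndep_iff_signSum, statIndep_iff_signSum, hg.signSum_eq_zero, hfg0, mul_zero, mul_zero,
    mul_eq_zero, mul_eq_zero, or_iff_right hT, or_iff_right hT]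
  have hxor : (fun α => xor (xor (f α) (h α)) (g α)) = fun α => xor (h α) (xor (f α) (g α)) := by
    funext α
    ac_rfl
  rw [hxor]

end Danira
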